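/- arXiv:2312.03953 — 3 statements merged into one kernel-verified Lean document; each statement's English description precedes it below -/
import Mathlib

section
/- Let (m_N) be a sequence of measurable functions on R^n with 0 ≤ m_N ≤ 1 pointwise and ∫ m_N = C for all N, where C > 0 is a fixed constant. Let f be a measurable function on R^n with f = f² almost everywhere and ∫ f = C. If ⟨φ, m_N⟩ → ⟨φ, f⟩ for every test function φ ∈ L¹(R^n) + L^∞(R^n) (in particular for φ = f), then m_N → f strongly in L²(R^n). -/
/-!
Since `0 ≤ m ≤ 1` and `f ∈ {0, 1}` a.e., pointwise `(m - f)² ≤ m + f - 2 f m`, so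
`‖m_N - f‖₂² ≤ ∫ m_N + ∫ f - 2 ⟨f, m_N⟩ = 2C - 2 ⟨f, m_N⟩`.
Testing the weak convergence against `φ = f` gives `⟨f, m_N⟩ → ⟨f, f⟩ = ∫ f = C`,
so the right-hand side tends to `0`.
-/

open MeasureTheory Filter Topology

lemma sq_sub_le_add_sub_two_mul_of_sq_eq {a b : ℝ} (ha₀ : 0 ≤ a) (ha₁ : a ≤ 1)
    (hb : b = b ^ 2) : (a - b) ^ 2 ≤ a + b - 2 * (b * a) := by
  nlinarith

lemma abs_sub_le_one_of_sq_eq {a b : ℝ} (ha₀ : 0 ≤ a) (ha₁ : a ≤ 1) (hb : b = b ^ 2) :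
    |a - b| ≤ 1 :=
  abs_le.2 ⟨by nlinarith, by nlinarith⟩

section UnitIntervalValued

variable {α : Type*} [MeasurableSpace α] {μ : Measure α} {m f : α → ℝ}

lemma integrable_sq_sub_of_sq_eq (hm : Integrable m μ) (hf : Integrable f μ)
    (hm01 : ∀ᵐ x ∂μ, 0 ≤ m x ∧ m x ≤ 1) (hf_sq : ∀ᵐ x ∂μ, f x = f x ^ 2) :
    Integrable (fun x => (m x - f x) ^ 2) μ := by
  refine (hm.sub hf).mono ((hm.sub hf).aestronglyMeasurable.pow 2) ?_
  filter_upwards [hm01, hf_sq] with x ⟨hx₀, hx₁⟩ hfx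
  have h := abs_sub_le_one_of_sq_eq hx₀ hx₁ hfx
  simp only [Pi.sub_apply, Real.norm_eq_abs, abs_pow]
  nlinarith [abs_nonneg (m x - f x)]

lemma integral_sq_sub_le_of_sq_eq (hm : Integrable m μ) (hf : Integrable f μ)
    (hm01 : ∀ᵐ x ∂μ, 0 ≤ m x ∧ m x ≤ 1) (hf_sq : ∀ᵐ x ∂μ, f x = f x ^ 2) :
    ∫ x, (m x - f x) ^ 2 ∂μ ≤ ∫ x, m x ∂μ + ∫ x, f x ∂μ - 2 * ∫ x, f x * m x ∂μ := by
  have hfm : Integrable (fun x => f x * m x) μ :=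
    hf.mul_bdd hm.aestronglyMeasurable (c := 1) <| hm01.mono fun x hx => by
      rw [Real.norm_eq_abs, abs_of_nonneg hx.1]; exact hx.2
  have hrhs : Integrable (fun x => m x + f x - 2 * (f x * m x)) μ :=
    (hm.add hf).sub (hfm.const_mul 2)
  calc ∫ x, (m x - f x) ^ 2 ∂μ ≤ ∫ x, m x + f x - 2 * (f x * m x) ∂μ := by
        refine integral_mono_ae (integrable_sq_sub_of_sq_eq hm hf hm01 hf_sq) hrhs ?_
        filter_upwards [hm01, hf_sq] with x ⟨hx₀, hx₁⟩ hfx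
        exact sq_sub_le_add_sub_two_mul_of_sq_eq hx₀ hx₁ hfx
    _ = ∫ x, m x ∂μ + ∫ x, f x ∂μ - 2 * ∫ x, f x * m x ∂μ := by
        rw [integral_sub (f := fun x => m x + f x) (hm.add hf) (hfm.const_mul 2), integral_add hm hf, integral_const_mul]

end UnitIntervalValued

lemma eLpNorm_two_eq_ofReal_integral_sq_rpow {α : Type*} [MeasurableSpace α] {μ : Measure α}
    {g : α → ℝ} (hg : Integrable (fun x => g x ^ 2) μ) :
    eLpNorm g 2 μ = ENNReal.ofReal (∫ x, g x ^ 2 ∂μ) ^ (1 / 2 : ℝ) := by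
  have hpt : ∀ x, ‖g x‖ₑ ^ ((2 : NNReal) : ℝ) = ENNReal.ofReal (g x ^ 2) := fun x => by
    rw [← ofReal_norm, ENNReal.ofReal_rpow_of_nonneg (norm_nonneg _) (by norm_num),
      NNReal.coe_ofNat, Real.rpow_two, Real.norm_eq_abs, sq_abs]
  rw [← ENNReal.coe_ofNat, eLpNorm_nnreal_eq_lintegral two_ne_zero, lintegral_congr hpt,
    ← ofReal_integral_eq_lintegral_ofReal hg (ae_of_all _ fun x => sq_nonneg _),
    NNReal.coe_ofNat]

lemma tendsto_eLpNorm_two_zero_of_integral_sq {ι α : Type*} [MeasurableSpace α]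
    {μ : Measure α} {l : Filter ι} {g : ι → α → ℝ}
    (hg : ∀ i, Integrable (fun x => g i x ^ 2) μ)
    (h : Tendsto (fun i => ∫ x, g i x ^ 2 ∂μ) l (𝓝 0)) :
    Tendsto (fun i => eLpNorm (g i) 2 μ) l (𝓝 0) := by
  simp_rw [eLpNorm_two_eq_ofReal_integral_sq_rpow (hg _)]
  have hcont : Continuous fun t : ℝ => ENNReal.ofReal t ^ (1 / 2 : ℝ) :=
    (ENNReal.continuous_rpow_const).comp ENNReal.continuous_ofReal
  simpa [Function.comp_def] using (hcont.tendsto 0).comp h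

theorem stmt0_general {n : ℕ} (C : ℝ)
    (m : ℕ → EuclideanSpace ℝ (Fin n) → ℝ) (f : EuclideanSpace ℝ (Fin n) → ℝ)
    (hm01 : ∀ N z, 0 ≤ m N z ∧ m N z ≤ 1)
    (hm_int : ∀ N, Integrable (m N) volume)
    (hm_mass : ∀ N, ∫ z, m N z = C)
    (hf_sq : ∀ᵐ z ∂(volume : Measure (EuclideanSpace ℝ (Fin n))), f z = (f z) ^ 2)
    (hf_int : Integrable f volume)
    (hf_mass : ∫ z, f z = C)
    (hweak : ∀ φ : EuclideanSpace ℝ (Fin n) → ℝ,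
      (MemLp φ 1 volume ∨ MemLp φ ⊤ volume) →
        Tendsto (fun N => ∫ z, φ z * m N z) atTop (𝓝 (∫ z, φ z * f z))) :
    Tendsto (fun N => eLpNorm (fun z => m N z - f z) 2 volume) atTop (𝓝 0) := by
  have hff : ∫ z, f z * f z = C :=
    hf_mass ▸ integral_congr_ae (hf_sq.mono fun z hz => by dsimp only; rw [← sq, ← hz])
  have hfm : Tendsto (fun N => ∫ z, f z * m N z) atTop (𝓝 C) :=
    hff ▸ hweak f (Or.inl (memLp_one_iff_integrable.2 hf_int))
  have hbound : Tendsto (fun N => C + C - 2 * ∫ z, f z * m N z) atTop (𝓝 0) := by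
    convert tendsto_const_nhds.sub (hfm.const_mul 2) using 2
    ring
  have hm01_ae N := ae_of_all volume (hm01 N)
  refine tendsto_eLpNorm_two_zero_of_integral_sq
    (fun N => integrable_sq_sub_of_sq_eq (hm_int N) hf_int (hm01_ae N) hf_sq) ?_
  refine squeeze_zero (fun N => integral_nonneg fun z => sq_nonneg _) (fun N => ?_) hbound
  simpa only [hm_mass N, hf_mass] using
    integral_sq_sub_le_of_sq_eq (hm_int N) hf_int (hm01_ae N) hf_sq

/-- If `0 ≤ m_N ≤ 1`, `∫ m_N = C`, `f = f²` a.e., `∫ f = C`, and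
`⟨φ, m_N⟩ → ⟨φ, f⟩` for every test function `φ ∈ L¹ + L^∞`, then `m_N → f` in `L²`. -/
theorem stmt0 {n : ℕ} (C : ℝ) (hC : 0 < C)
    (m : ℕ → EuclideanSpace ℝ (Fin n) → ℝ) (f : EuclideanSpace ℝ (Fin n) → ℝ)
    (hm_meas : ∀ N, Measurable (m N))
    (hm01 : ∀ N z, 0 ≤ m N z ∧ m N z ≤ 1)
    (hm_int : ∀ N, Integrable (m N) volume)
    (hm_mass : ∀ N, ∫ z, m N z = C)
    (hf_meas : Measurable f)
    (hf_sq : ∀ᵐ z ∂(volume : Measure (EuclideanSpace ℝ (Fin n))), f z = (f z) ^ 2)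
    (hf_int : Integrable f volume)
    (hf_mass : ∫ z, f z = C)
    (hweak : ∀ φ : EuclideanSpace ℝ (Fin n) → ℝ,
      (MemLp φ 1 volume ∨ MemLp φ ⊤ volume) →
        Tendsto (fun N => ∫ z, φ z * m N z) atTop (𝓝 (∫ z, φ z * f z))) :
    Tendsto (fun N => eLpNorm (fun z => m N z - f z) 2 volume) atTop (𝓝 0) :=
  stmt0_general C m f hm01 hm_int hm_mass hf_sq hf_int hf_mass hweak
end

section
/- Let (m_N) be a sequence of measurable functions on R^n with 0 ≤ m_N ≤ 1 and ∫ m_N = C, and let f satisfy f = f² a.e. with ∫ f = C. Suppose ‖m_N − f‖_{L²} → 0 and ⟨1 − f, m_N⟩ → 0. Then m_N → f strongly in L¹(R^n). -/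
open MeasureTheory Filter Topology

/-! Since `f` takes only the values `0` and `1` and `0 ≤ m ≤ 1`, pointwise
`|m - f| = m + f - 2 f m`. Integrating and using `∫ f = ∫ m` gives
`‖m - f‖_{L¹} = 2 ∫ (1 - f) m`, which tends to `0` with `⟨1 - f, m_N⟩`. -/

lemma abs_sub_eq_add_sub_two_mul_of_mem_zero_one {a b : ℝ} (ha : a = 0 ∨ a = 1)
    (hb : 0 ≤ b ∧ b ≤ 1) : |b - a| = b + a - 2 * (a * b) := by
  rcases ha with rfl | rfl
  · rw [abs_of_nonneg (by linarith)]; ring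
  · rw [abs_of_nonpos (by linarith)]; ring

section

variable {α : Type*} [MeasurableSpace α] {μ : Measure α} {m f : α → ℝ}

lemma integral_abs_sub_eq_two_mul_integral_one_sub_mul
    (hm01 : ∀ᵐ z ∂μ, 0 ≤ m z ∧ m z ≤ 1) (hf01 : ∀ᵐ z ∂μ, f z = 0 ∨ f z = 1)
    (hm : Integrable m μ) (hf : Integrable f μ) (hmass : ∫ z, m z ∂μ = ∫ z, f z ∂μ) :
    ∫ z, |m z - f z| ∂μ = 2 * ∫ z, (1 - f z) * m z ∂μ := by
  have hfm : Integrable (fun z => f z * m z) μ := by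
    refine hf.mul_bdd hm.aestronglyMeasurable (c := 1) ?_
    filter_upwards [hm01] with z hz
    rw [Real.norm_eq_abs, abs_of_nonneg hz.1]
    exact hz.2
  have hpointwise : (fun z => |m z - f z|) =ᵐ[μ] fun z => m z + f z - 2 * (f z * m z) := by
    filter_upwards [hm01, hf01] with z hmz hfz
    exact abs_sub_eq_add_sub_two_mul_of_mem_zero_one hfz hmz
  have hpair : ∫ z, (1 - f z) * m z ∂μ = ∫ z, m z ∂μ - ∫ z, f z * m z ∂μ := by
    simp_rw [sub_mul, one_mul]
    exact integral_sub hm hfm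
  rw [integral_congr_ae hpointwise,
    integral_sub (f := fun z => m z + f z) (hm.add hf) (hfm.const_mul 2), integral_add hm hf, integral_const_mul, hpair, ← hmass]
  ring

lemma eLpNorm_one_sub_eq_ofReal_two_mul_integral_one_sub_mul
    (hm01 : ∀ᵐ z ∂μ, 0 ≤ m z ∧ m z ≤ 1) (hf01 : ∀ᵐ z ∂μ, f z = 0 ∨ f z = 1)
    (hm : Integrable m μ) (hf : Integrable f μ) (hmass : ∫ z, m z ∂μ = ∫ z, f z ∂μ) :
    eLpNorm (fun z => m z - f z) 1 μ = ENNReal.ofReal (2 * ∫ z, (1 - f z) * m z ∂μ) := by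
  rw [eLpNorm_one_eq_lintegral_enorm,
    ← ofReal_integral_norm_eq_lintegral_enorm (f := fun z => m z - f z) (hm.sub hf),
    ← integral_abs_sub_eq_two_mul_integral_one_sub_mul hm01 hf01 hm hf hmass]
  simp only [Real.norm_eq_abs]

end

theorem stmt1_general {n : ℕ} (C : ℝ)
    (m : ℕ → EuclideanSpace ℝ (Fin n) → ℝ) (f : EuclideanSpace ℝ (Fin n) → ℝ)
    (hm01 : ∀ N z, 0 ≤ m N z ∧ m N z ≤ 1)
    (hm_int : ∀ N, Integrable (m N) volume)
    (hm_mass : ∀ N, ∫ z, m N z = C)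
    (hf_sq : ∀ᵐ z ∂(volume : Measure (EuclideanSpace ℝ (Fin n))), f z = (f z) ^ 2)
    (hf_int : Integrable f volume)
    (hf_mass : ∫ z, f z = C)
    (hpair : Tendsto (fun N => ∫ z, (1 - f z) * m N z) atTop (𝓝 0)) :
    Tendsto (fun N => eLpNorm (fun z => m N z - f z) 1 volume) atTop (𝓝 0) := by
  have hf01 : ∀ᵐ z ∂(volume : Measure (EuclideanSpace ℝ (Fin n))), f z = 0 ∨ f z = 1 := by
    filter_upwards [hf_sq] with z hz
    exact eq_zero_or_one_of_sq_eq_self hz.symm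
  have hL1 : ∀ N, eLpNorm (fun z => m N z - f z) 1 volume
      = ENNReal.ofReal (2 * ∫ z, (1 - f z) * m N z) := fun N =>
    eLpNorm_one_sub_eq_ofReal_two_mul_integral_one_sub_mul (ae_of_all _ (hm01 N)) hf01
      (hm_int N) hf_int (by rw [hm_mass, hf_mass])
  simp_rw [hL1]
  simpa using (ENNReal.tendsto_ofReal (hpair.const_mul 2))

/-- If `0 ≤ m_N ≤ 1`, `∫ m_N = C`, `f = f²` a.e., `∫ f = C`,
`‖m_N − f‖_{L²} → 0` and `⟨1 − f, m_N⟩ → 0`, then `m_N → f` strongly in `L¹`. -/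
theorem stmt1 {n : ℕ} (C : ℝ) (hC : 0 < C)
    (m : ℕ → EuclideanSpace ℝ (Fin n) → ℝ) (f : EuclideanSpace ℝ (Fin n) → ℝ)
    (hm_meas : ∀ N, Measurable (m N))
    (hm01 : ∀ N z, 0 ≤ m N z ∧ m N z ≤ 1)
    (hm_int : ∀ N, Integrable (m N) volume)
    (hm_mass : ∀ N, ∫ z, m N z = C)
    (hf_meas : Measurable f)
    (hf_sq : ∀ᵐ z ∂(volume : Measure (EuclideanSpace ℝ (Fin n))), f z = (f z) ^ 2)
    (hf_int : Integrable f volume)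
    (hf_mass : ∫ z, f z = C)
    (hL2 : Tendsto (fun N => eLpNorm (fun z => m N z - f z) 2 volume) atTop (𝓝 0))
    (hpair : Tendsto (fun N => ∫ z, (1 - f z) * m N z) atTop (𝓝 0)) :
    Tendsto (fun N => eLpNorm (fun z => m N z - f z) 1 volume) atTop (𝓝 0) :=
  stmt1_general C m f hm01 hm_int hm_mass hf_sq hf_int hf_mass hpair
end

section
/- Let f ∈ L²(R^n) with f = f² a.e. and ∫ f = c², and let (f_N) ⊂ L²(R^n) with ‖f_N‖_{L²} = c for all N and ‖f_N − f‖_{L²} → 0. Then limsup_N ‖f − f_N‖_{L¹} = limsup_N ‖f_N‖_{L¹} − c², where all L¹ norms of f_N are allowed to be +∞. In particular, f_N → f in L¹ if and only if ‖f_N‖_{L¹} → c². -/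
/-! Since `f` takes only the values `0` and `1`, every `L¹` norm splits along `{f = 1}`:
`‖f - g‖₁ = ‖f (f - g)‖₁ + ‖(1 - f) g‖₁` and `‖g‖₁ = ‖f g‖₁ + ‖(1 - f) g‖₁`.
By Cauchy–Schwarz, `‖f (f - F_N)‖₁ ≤ ‖f‖₂ ‖f - F_N‖₂ → 0`, while `‖f F_N‖₁` is squeezed between
`‖f‖₁ - ‖f (f - F_N)‖₁` and `‖f‖₂ ‖F_N‖₂ ≤ ‖f‖₂² = ‖f‖₁ = c²`. So both `‖f - F_N‖₁` and
`‖F_N‖₁` are, up to vanishing errors, `0` resp. `c²` plus the common tail `‖(1 - f) F_N‖₁`. -/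

open MeasureTheory Filter Topology
open scoped ENNReal

namespace ENNReal

variable {ι : Type*} {l : Filter ι} {u v : ι → ℝ≥0∞} {a b : ℝ≥0∞}

theorem limsup_add_of_left_tendsto [l.NeBot] (ha : a ≠ ∞) (hu : Tendsto u l (𝓝 a)) :
    limsup (u + v) l = a + limsup v l := by
  -- `u ≤ a + (u - a)` and `a ≤ u + (a - u)`, where both truncated differences tend to `0`.
  have hsub : Tendsto (fun i => u i - a) l (𝓝 0) := by
    simpa using ENNReal.Tendsto.sub hu tendsto_const_nhds (Or.inr ha)
  have hsub' : Tendsto (fun i => a - u i) l (𝓝 0) := by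
    simpa using ENNReal.Tendsto.sub tendsto_const_nhds hu (Or.inl ha)
  rw [← limsup_const_add l v a (by isBoundedDefault) (by isBoundedDefault)]
  apply le_antisymm
  · calc limsup (u + v) l ≤ limsup ((fun i => a + v i) + fun i => u i - a) l :=
          limsup_le_limsup (.of_forall fun i =>
            (add_le_add_left le_add_tsub _).trans_eq (add_right_comm _ _ _))
      _ = limsup (fun i => a + v i) l := limsup_add_of_right_tendsto_zero hsub _
  · calc limsup (fun i => a + v i) l ≤ limsup ((u + v) + fun i => a - u i) l :=
          limsup_le_limsup (.of_forall fun i =>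
            (add_le_add_left le_add_tsub _).trans_eq (add_right_comm _ _ _))
      _ = limsup (u + v) l := limsup_add_of_right_tendsto_zero hsub' _

theorem tendsto_add_iff_of_left_tendsto (ha : a ≠ ∞) (hu : Tendsto u l (𝓝 a)) :
    Tendsto (u + v) l (𝓝 (a + b)) ↔ Tendsto v l (𝓝 b) := by
  refine ⟨fun huv => ?_, hu.add⟩
  have hv : (u + v) - u =ᶠ[l] v := by
    filter_upwards [hu.eventually_ne ha] with i hi
    exact ENNReal.add_sub_cancel_left hi
  simpa [ENNReal.add_sub_cancel_left ha] using
    (ENNReal.Tendsto.sub huv hu (Or.inr ha)).congr' hv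

end ENNReal

section ZeroOneValued

variable {α : Type*} [MeasurableSpace α] {μ : Measure α} {f g : α → ℝ}

theorem eLpNorm_eq_eLpNorm_one_rpow_of_ae_zero_or_one (hf01 : ∀ᵐ x ∂μ, f x = 0 ∨ f x = 1)
    {p : ℝ≥0∞} (hp0 : p ≠ 0) (hp : p ≠ ∞) :
    eLpNorm f p μ = eLpNorm f 1 μ ^ (1 / p.toReal) := by
  rw [eLpNorm_eq_lintegral_rpow_enorm_toReal hp0 hp, eLpNorm_one_eq_lintegral_enorm]
  congr 1
  refine lintegral_congr_ae (hf01.mono fun x hx => ?_)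
  rcases hx with h | h <;> simp [h, ENNReal.toReal_pos hp0 hp]

theorem eLpNorm_one_eq_add_of_ae_zero_or_one (hf01 : ∀ᵐ x ∂μ, f x = 0 ∨ f x = 1)
    (hf : AEStronglyMeasurable f μ) (hg : AEStronglyMeasurable g μ) :
    eLpNorm g 1 μ = eLpNorm (f * g) 1 μ + eLpNorm ((1 - f) * g) 1 μ := by
  simp only [eLpNorm_one_eq_lintegral_enorm]
  rw [← lintegral_add_left' (hf.mul hg).enorm]
  refine lintegral_congr_ae (hf01.mono fun x hx => ?_)
  rcases hx with h | h <;> simp [h]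

theorem eLpNorm_one_sub_eq_add_of_ae_zero_or_one (hf01 : ∀ᵐ x ∂μ, f x = 0 ∨ f x = 1)
    (hf : AEStronglyMeasurable f μ) (hg : AEStronglyMeasurable g μ) :
    eLpNorm (f - g) 1 μ = eLpNorm (f * (f - g)) 1 μ + eLpNorm ((1 - f) * g) 1 μ := by
  rw [eLpNorm_one_eq_add_of_ae_zero_or_one hf01 hf (hf.sub hg)]
  congr 1
  refine eLpNorm_congr_norm_ae (hf01.mono fun x hx => ?_)
  rcases hx with h | h <;> simp [h]

theorem eLpNorm_one_le_add_of_ae_zero_or_one (hf01 : ∀ᵐ x ∂μ, f x = 0 ∨ f x = 1)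
    (hf : AEStronglyMeasurable f μ) (hg : AEStronglyMeasurable g μ) :
    eLpNorm f 1 μ ≤ eLpNorm (f * g) 1 μ + eLpNorm (f * (f - g)) 1 μ := by
  have hsplit : f =ᵐ[μ] f * g + f * (f - g) := hf01.mono fun x hx => by
    rcases hx with h | h <;> simp [h]
  rw [eLpNorm_congr_ae hsplit]
  exact eLpNorm_add_le (hf.mul hg) (hf.mul (hf.sub hg)) le_rfl

theorem eLpNorm_mul_le_eLpNorm_two_mul_eLpNorm_two (hf : AEStronglyMeasurable f μ)
    (hg : AEStronglyMeasurable g μ) :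
    eLpNorm (f * g) 1 μ ≤ eLpNorm f 2 μ * eLpNorm g 2 μ :=
  (eLpNorm_smul_le_mul_eLpNorm (p := 2) (q := 2) (r := 1) hg hf :)

theorem eLpNorm_two_mul_self_of_ae_zero_or_one (hf01 : ∀ᵐ x ∂μ, f x = 0 ∨ f x = 1) :
    eLpNorm f 2 μ * eLpNorm f 2 μ = eLpNorm f 1 μ := by
  rw [eLpNorm_eq_eLpNorm_one_rpow_of_ae_zero_or_one hf01 two_ne_zero ENNReal.ofNat_ne_top,
    ← pow_two, ← ENNReal.rpow_natCast, ← ENNReal.rpow_mul]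
  norm_num

theorem eLpNorm_two_ne_top_of_ae_zero_or_one (hf01 : ∀ᵐ x ∂μ, f x = 0 ∨ f x = 1)
    (hf : eLpNorm f 1 μ ≠ ∞) : eLpNorm f 2 μ ≠ ∞ := by
  rw [eLpNorm_eq_eLpNorm_one_rpow_of_ae_zero_or_one hf01 two_ne_zero ENNReal.ofNat_ne_top]
  exact ENNReal.rpow_ne_top_of_nonneg (by positivity) hf

variable {ι : Type*} {l : Filter ι} {F : ι → α → ℝ}

theorem tendsto_eLpNorm_mul_sub_of_tendsto_eLpNorm_two (hf2 : eLpNorm f 2 μ ≠ ∞)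
    (hf : AEStronglyMeasurable f μ) (hF : ∀ i, AEStronglyMeasurable (F i) μ)
    (hconv : Tendsto (fun i => eLpNorm (F i - f) 2 μ) l (𝓝 0)) :
    Tendsto (fun i => eLpNorm (f * (f - F i)) 1 μ) l (𝓝 0) := by
  have hbound : Tendsto (fun i => eLpNorm f 2 μ * eLpNorm (F i - f) 2 μ) l (𝓝 0) := by
    simpa using ENNReal.Tendsto.const_mul hconv (Or.inr hf2)
  refine tendsto_of_tendsto_of_tendsto_of_le_of_le tendsto_const_nhds hbound
    (fun i => zero_le) fun i => ?_
  rw [← eLpNorm_sub_comm]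
  exact eLpNorm_mul_le_eLpNorm_two_mul_eLpNorm_two hf (hf.sub (hF i))

theorem tendsto_eLpNorm_mul_of_tendsto_eLpNorm_two (hf01 : ∀ᵐ x ∂μ, f x = 0 ∨ f x = 1)
    (hf : Integrable f μ) (hF : ∀ i, AEStronglyMeasurable (F i) μ)
    (hF2 : ∀ i, eLpNorm (F i) 2 μ ≤ eLpNorm f 2 μ)
    (hconv : Tendsto (fun i => eLpNorm (F i - f) 2 μ) l (𝓝 0)) :
    Tendsto (fun i => eLpNorm (f * F i) 1 μ) l (𝓝 (eLpNorm f 1 μ)) := by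
  have hfin : eLpNorm f 1 μ ≠ ∞ := (memLp_one_iff_integrable.2 hf).eLpNorm_ne_top
  have hf2 := eLpNorm_two_ne_top_of_ae_zero_or_one hf01 hfin
  have hA := tendsto_eLpNorm_mul_sub_of_tendsto_eLpNorm_two hf2 hf.1 hF hconv
  have hlower : Tendsto (fun i => eLpNorm f 1 μ - eLpNorm (f * (f - F i)) 1 μ) l
      (𝓝 (eLpNorm f 1 μ)) := by
    simpa using ENNReal.Tendsto.sub tendsto_const_nhds hA (Or.inl hfin)
  refine tendsto_of_tendsto_of_tendsto_of_le_of_le hlower tendsto_const_nhds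
    (fun i => tsub_le_iff_right.2 (eLpNorm_one_le_add_of_ae_zero_or_one hf01 hf.1 (hF i)))
    fun i => ?_
  calc eLpNorm (f * F i) 1 μ ≤ eLpNorm f 2 μ * eLpNorm (F i) 2 μ :=
        eLpNorm_mul_le_eLpNorm_two_mul_eLpNorm_two hf.1 (hF i)
    _ ≤ eLpNorm f 2 μ * eLpNorm f 2 μ := by gcongr; exact hF2 i
    _ = eLpNorm f 1 μ := eLpNorm_two_mul_self_of_ae_zero_or_one hf01

theorem limsup_eLpNorm_one_sub_eq [l.NeBot] (hf01 : ∀ᵐ x ∂μ, f x = 0 ∨ f x = 1)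
    (hf : Integrable f μ) (hF : ∀ i, AEStronglyMeasurable (F i) μ)
    (hF2 : ∀ i, eLpNorm (F i) 2 μ ≤ eLpNorm f 2 μ)
    (hconv : Tendsto (fun i => eLpNorm (F i - f) 2 μ) l (𝓝 0)) :
    limsup (fun i => eLpNorm (f - F i) 1 μ) l
      = limsup (fun i => eLpNorm (F i) 1 μ) l - eLpNorm f 1 μ := by
  have hfin : eLpNorm f 1 μ ≠ ∞ := (memLp_one_iff_integrable.2 hf).eLpNorm_ne_top
  have hf2 := eLpNorm_two_ne_top_of_ae_zero_or_one hf01 hfin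
  have hsub : (fun i => eLpNorm (f - F i) 1 μ) = (fun i => eLpNorm (f * (f - F i)) 1 μ)
      + fun i => eLpNorm ((1 - f) * F i) 1 μ :=
    funext fun i => eLpNorm_one_sub_eq_add_of_ae_zero_or_one hf01 hf.1 (hF i)
  have hF1 : (fun i => eLpNorm (F i) 1 μ) = (fun i => eLpNorm (f * F i) 1 μ)
      + fun i => eLpNorm ((1 - f) * F i) 1 μ :=
    funext fun i => eLpNorm_one_eq_add_of_ae_zero_or_one hf01 hf.1 (hF i)
  rw [hsub, hF1, ENNReal.limsup_add_of_left_tendsto ENNReal.zero_ne_top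
    (tendsto_eLpNorm_mul_sub_of_tendsto_eLpNorm_two hf2 hf.1 hF hconv),
    ENNReal.limsup_add_of_left_tendsto hfin
    (tendsto_eLpNorm_mul_of_tendsto_eLpNorm_two hf01 hf hF hF2 hconv),
    zero_add, ENNReal.add_sub_cancel_left hfin]

theorem tendsto_eLpNorm_one_sub_iff (hf01 : ∀ᵐ x ∂μ, f x = 0 ∨ f x = 1)
    (hf : Integrable f μ) (hF : ∀ i, AEStronglyMeasurable (F i) μ)
    (hF2 : ∀ i, eLpNorm (F i) 2 μ ≤ eLpNorm f 2 μ)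
    (hconv : Tendsto (fun i => eLpNorm (F i - f) 2 μ) l (𝓝 0)) :
    Tendsto (fun i => eLpNorm (F i - f) 1 μ) l (𝓝 0)
      ↔ Tendsto (fun i => eLpNorm (F i) 1 μ) l (𝓝 (eLpNorm f 1 μ)) := by
  have hfin : eLpNorm f 1 μ ≠ ∞ := (memLp_one_iff_integrable.2 hf).eLpNorm_ne_top
  have hf2 := eLpNorm_two_ne_top_of_ae_zero_or_one hf01 hfin
  set C := fun i => eLpNorm ((1 - f) * F i) 1 μ
  have hsub : (fun i => eLpNorm (F i - f) 1 μ) = (fun i => eLpNorm (f * (f - F i)) 1 μ) + C :=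
    funext fun i => (eLpNorm_sub_comm _ _ _ _).trans
      (eLpNorm_one_sub_eq_add_of_ae_zero_or_one hf01 hf.1 (hF i))
  have hF1 : (fun i => eLpNorm (F i) 1 μ) = (fun i => eLpNorm (f * F i) 1 μ) + C :=
    funext fun i => eLpNorm_one_eq_add_of_ae_zero_or_one hf01 hf.1 (hF i)
  rw [hsub, hF1, ← zero_add (0 : ℝ≥0∞),
    ENNReal.tendsto_add_iff_of_left_tendsto ENNReal.zero_ne_top
      (tendsto_eLpNorm_mul_sub_of_tendsto_eLpNorm_two hf2 hf.1 hF hconv),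
    ← add_zero (eLpNorm f 1 μ),
    ENNReal.tendsto_add_iff_of_left_tendsto hfin
      (tendsto_eLpNorm_mul_of_tendsto_eLpNorm_two hf01 hf hF hF2 hconv)]

end ZeroOneValued

theorem stmt11_general {n : ℕ} (c : ℝ) (hc : 0 ≤ c)
    (f : EuclideanSpace ℝ (Fin n) → ℝ) (F : ℕ → EuclideanSpace ℝ (Fin n) → ℝ)
    (hfsq : ∀ᵐ z ∂(volume : Measure (EuclideanSpace ℝ (Fin n))), f z = f z ^ 2)
    (hfint : Integrable f volume) (hfmass : ∫ z, f z = c ^ 2)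
    (hFL2 : ∀ N, MemLp (F N) 2 volume)
    (hFnorm : ∀ N, eLpNorm (F N) 2 volume = ENNReal.ofReal c)
    (hconv : Tendsto (fun N => eLpNorm (fun z => F N z - f z) 2 volume) atTop (𝓝 0)) :
    Filter.limsup (fun N => eLpNorm (fun z => f z - F N z) 1 volume) atTop
        = Filter.limsup (fun N => eLpNorm (F N) 1 volume) atTop - ENNReal.ofReal (c ^ 2)
    ∧ (Tendsto (fun N => eLpNorm (fun z => F N z - f z) 1 volume) atTop (𝓝 0)
        ↔ Tendsto (fun N => eLpNorm (F N) 1 volume) atTop (𝓝 (ENNReal.ofReal (c ^ 2)))) := by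
  have hf01 : ∀ᵐ z ∂volume, f z = 0 ∨ f z = 1 := hfsq.mono fun z hz =>
    IsIdempotentElem.iff_eq_zero_or_one.1 (by rw [IsIdempotentElem, ← sq, ← hz])
  have hf1 : eLpNorm f 1 volume = ENNReal.ofReal (c ^ 2) := by
    have hfnn : ∀ᵐ z ∂volume, ‖f z‖ = f z :=
      hf01.mono fun z hz => by rcases hz with h | h <;> simp [h]
    rw [eLpNorm_one_eq_lintegral_enorm, ← ofReal_integral_norm_eq_lintegral_enorm hfint,
      integral_congr_ae hfnn, hfmass]
  have hf2 : eLpNorm f 2 volume = ENNReal.ofReal c := by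
    rw [eLpNorm_eq_eLpNorm_one_rpow_of_ae_zero_or_one hf01 two_ne_zero ENNReal.ofNat_ne_top, hf1,
      ENNReal.ofReal_rpow_of_nonneg (by positivity) (by positivity), ENNReal.toReal_ofNat,
      ← Real.sqrt_eq_rpow, Real.sqrt_sq hc]
  have hF2 : ∀ N, eLpNorm (F N) 2 volume ≤ eLpNorm f 2 volume := fun N =>
    ((hFnorm N).trans hf2.symm).le
  have hF : ∀ N, AEStronglyMeasurable (F N) volume := fun N => (hFL2 N).1
  rw [← hf1]
  exact ⟨limsup_eLpNorm_one_sub_eq hf01 hfint hF hF2 hconv,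
    tendsto_eLpNorm_one_sub_iff hf01 hfint hF hF2 hconv⟩

/-- If `f = f²` a.e., `∫ f = c²`, `‖f_N‖_{L²} = c` and `‖f_N − f‖_{L²} → 0`,
then `limsup ‖f − f_N‖_{L¹} = limsup ‖f_N‖_{L¹} − c²` (in extended reals); in particular
`f_N → f` in `L¹` iff `‖f_N‖_{L¹} → c²`. -/
theorem stmt11 {n : ℕ} (c : ℝ) (hc : 0 ≤ c)
    (f : EuclideanSpace ℝ (Fin n) → ℝ) (F : ℕ → EuclideanSpace ℝ (Fin n) → ℝ)
    (hfL2 : MemLp f 2 volume)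
    (hfsq : ∀ᵐ z ∂(volume : Measure (EuclideanSpace ℝ (Fin n))), f z = f z ^ 2)
    (hfint : Integrable f volume) (hfmass : ∫ z, f z = c ^ 2)
    (hFL2 : ∀ N, MemLp (F N) 2 volume)
    (hFnorm : ∀ N, eLpNorm (F N) 2 volume = ENNReal.ofReal c)
    (hconv : Tendsto (fun N => eLpNorm (fun z => F N z - f z) 2 volume) atTop (𝓝 0)) :
    Filter.limsup (fun N => eLpNorm (fun z => f z - F N z) 1 volume) atTop
        = Filter.limsup (fun N => eLpNorm (F N) 1 volume) atTop - ENNReal.ofReal (c ^ 2)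
    ∧ (Tendsto (fun N => eLpNorm (fun z => F N z - f z) 1 volume) atTop (𝓝 0)
        ↔ Tendsto (fun N => eLpNorm (F N) 1 volume) atTop (𝓝 (ENNReal.ofReal (c ^ 2)))) :=
  stmt11_general c hc f F hfsq hfint hfmass hFL2 hFnorm hconv
end
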